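/- arXiv:2102.03811 — 7 statements merged into one kernel-verified Lean document; each statement's English description precedes it below -/
import Mathlib

section
/- Let R be a ring and let T be the subring of the 2×2 matrix ring M₂(R) consisting of all upper triangular matrices (matrices whose (2,1)-entry is zero). If a, c ∈ R are quasinilpotent in R and b ∈ R, then the matrix A = !![a, b; 0, c], regarded as an element of T, is quasinilpotent in the ring T; that is, for every upper triangular matrix B ∈ T with A·B = B·A, the element 1 + A·B is a unit of the ring T. -/
/-- An element `a` of a ring is quasinilpotent if `1 + a * x` is a unit
for every `x` commuting with `a`. -/
def IsQuasinilpotent {R : Type*} [Ring R] (a : R) : Prop :=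
  ∀ x : R, a * x = x * a → IsUnit (1 + a * x)

/-- The subring of `M₂(R)` consisting of upper triangular matrices. -/
def upperTri2 (R : Type*) [Ring R] : Subring (Matrix (Fin 2) (Fin 2) R) where
  carrier := {M | M 1 0 = 0}
  zero_mem' := by simp
  one_mem' := by simp [Matrix.one_apply]
  add_mem' := by
    intro A B hA hB
    simp only [Set.mem_setOf_eq] at *
    simp [Matrix.add_apply, hA, hB]
  neg_mem' := by
    intro A hA
    simp only [Set.mem_setOf_eq] at *
    simp [Matrix.neg_apply, hA]
  mul_mem' := by
    intro A B hA hB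
    simp only [Set.mem_setOf_eq] at *
    simp [Matrix.mul_apply, Fin.sum_univ_two, hA, hB]

/-! The diagonal map `upperTri2 R → R × R`, `M ↦ (M₀₀, M₁₁)`, is a ring homomorphism, and it
reflects units: a triangular matrix with invertible diagonal entries `u, v` has the triangular
inverse `!![u⁻¹, -u⁻¹ w v⁻¹; 0, v⁻¹]`. Quasinilpotence pulls back along any unit-reflecting ring
homomorphism, and `(a, c)` is quasinilpotent in `R × R` because units and commutation in a
product are checked componentwise. -/

theorem IsQuasinilpotent.of_map {S T F : Type*} [Ring S] [Ring T] [FunLike F S T]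
    [RingHomClass F S T] (f : F) [IsLocalHom f] {a : S} (h : IsQuasinilpotent (f a)) :
    IsQuasinilpotent a := fun x hx =>
  isUnit_of_map_unit f _ <| by
    simpa only [map_add, map_one, map_mul] using h (f x) (by simp only [← map_mul, hx])

theorem IsQuasinilpotent.prod {R S : Type*} [Ring R] [Ring S] {a : R} {c : S}
    (ha : IsQuasinilpotent a) (hc : IsQuasinilpotent c) : IsQuasinilpotent (a, c) :=
  fun x hx => Prod.isUnit_iff.mpr
    ⟨ha x.1 (congrArg Prod.fst hx), hc x.2 (congrArg Prod.snd hx)⟩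

namespace upperTri2

variable {R : Type*} [Ring R]

theorem eta (M : upperTri2 R) :
    (M : Matrix (Fin 2) (Fin 2) R) = !![M.1 0 0, M.1 0 1; 0, M.1 1 1] :=
  M.1.eta_fin_two.trans (by rw [show M.1 1 0 = 0 from M.2])

theorem fin_two_mem (x y z : R) : !![x, y; 0, z] ∈ upperTri2 R := by
  show !![x, y; 0, z] 1 0 = 0
  simp

variable (R) in
def diagHom : upperTri2 R →+* R × R where
  toFun M := (M.1 0 0, M.1 1 1)
  map_one' := by simp
  map_mul' M N := by
    rw [Subring.coe_mul, eta M, eta N, Matrix.mul_fin_two]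
    simp
  map_zero' := by simp
  map_add' M N := by simp

theorem isUnit_mk_of_units (u v : Rˣ) (w : R) :
    IsUnit (⟨!![(u : R), w; 0, (v : R)], fin_two_mem _ _ _⟩ : upperTri2 R) :=
  isUnit_iff_exists.mpr
    ⟨⟨_, fin_two_mem (↑u⁻¹ : R) (-(↑u⁻¹ * w * ↑v⁻¹)) ↑v⁻¹⟩,
      Subtype.ext <| by simp [Matrix.one_fin_two, ← mul_assoc],
      Subtype.ext <| by simp [Matrix.one_fin_two, mul_assoc]⟩

instance : IsLocalHom (diagHom R) where
  map_nonunit M hdiag := by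
    obtain ⟨⟨u, hu : (u : R) = M.1 0 0⟩, ⟨v, hv : (v : R) = M.1 1 1⟩⟩ := Prod.isUnit_iff.mp hdiag
    have hM : M = ⟨!![(u : R), M.1 0 1; 0, (v : R)], fin_two_mem _ _ _⟩ := by
      ext1
      rw [hu, hv]
      exact eta M
    rw [hM]
    exact isUnit_mk_of_units u v _

end upperTri2

theorem stmt0 {R : Type*} [Ring R] (a b c : R)
    (ha : IsQuasinilpotent a) (hc : IsQuasinilpotent c) :
    IsQuasinilpotent
      (⟨!![a, b; 0, c], by show !![a, b; 0, c] 1 0 = 0; simp⟩ : upperTri2 R) :=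
  IsQuasinilpotent.of_map (upperTri2.diagHom R) (ha.prod hc)
end

section
/- Let S be a commutative ring and R a unital S-algebra, and let Unitization S R denote the Dorroh (ideal) extension of R by S. For every a ∈ R, the element a is quasinilpotent in the ring R if and only if the element inr a = (0, a) is quasinilpotent in the ring Unitization S R. -/
namespace Unitization

variable {S R : Type*} [CommSemiring S]

lemma isUnit_one_add_inr_iff [Ring R] [Algebra S R] (m : R) :
    IsUnit (1 + (inr m : Unitization S R)) ↔ IsUnit (1 + m) :=
  (isQuasiregular_iff_isUnit' S).symm.trans isQuasiregular_iff_isUnit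

lemma inr_mul_eq_inr_mul_lift [Semiring R] [Algebra S R] (a : R) (x : Unitization S R) :
    (inr a : Unitization S R) * x = inr (a * lift (NonUnitalAlgHom.id S R) x) := by
  induction x with
  | inl_add_inr s r =>
    simp [mul_add, inr_mul_inl, ← inr_mul, Algebra.smul_def, Algebra.commutes]

end Unitization

open Unitization in
theorem stmt4 {S R : Type*} [CommRing S] [Ring R] [Algebra S R] (a : R) :
    IsQuasinilpotent a ↔
      IsQuasinilpotent (Unitization.inr a : Unitization S R) := by
  constructor
  · intro ha x hx
    set φ := lift (NonUnitalAlgHom.id S R)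
    have hφx : Commute a (φ x) := by simpa [φ] using Commute.map hx φ
    rw [inr_mul_eq_inr_mul_lift, isUnit_one_add_inr_iff]
    exact ha _ hφx
  · intro ha x hx
    have hinr : Commute (inr a : Unitization S R) (inr x) :=
      Commute.map hx (inrNonUnitalAlgHom S R)
    simpa only [← inr_mul, isUnit_one_add_inr_iff] using ha _ hinr
end

section
/- Let S be a commutative ring and R a unital S-algebra, and let Unitization S R denote the Dorroh (ideal) extension of R by S. Let s ∈ S be quasinilpotent in S. Then the element inl s = (s, 0) is quasinilpotent in Unitization S R if and only if for every a ∈ R and every b ∈ S there exist u ∈ R and v ∈ S such that (algebraMap S R s · (a + algebraMap S R b) + 1) · (u + algebraMap S R v) = 1 in R and (1 + s·b)·v = 1 in S. -/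
/-! The ring map `x ↦ (x.fst, algebraMap S R x.fst + x.snd)` identifies `Unitization S R` with
`S × R`, and `inl s` is central, so `inl s` is quasinilpotent iff all `1 + s * b` are units in `S`
and all `1 + algebraMap S R s * r` are units in `R`. The right-hand side only provides right
inverses; in `R` that suffices, because a right inverse `w` of `1 + c * r` equals
`1 + c * (-(r * w))` and so has a right inverse itself. -/

theorem isUnit_one_add_mul_of_forall_exists_mul_eq_one {R : Type*} [Ring R] {c : R}
    (h : ∀ r, ∃ w, (1 + c * r) * w = 1) (r : R) : IsUnit (1 + c * r) := by
  obtain ⟨w, hw⟩ := h r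
  obtain ⟨w', hw'⟩ := h (-(r * w))
  have hw_eq : 1 + c * -(r * w) = w := by
    rw [← hw]; noncomm_ring
  rw [hw_eq] at hw'
  have hw'_eq : w' = 1 + c * r := left_inv_eq_right_inv hw hw' |>.symm
  exact ⟨⟨1 + c * r, w, hw, hw'_eq ▸ hw'⟩, rfl⟩

namespace Unitization

variable {S R : Type*} [CommRing S] [Ring R] [Algebra S R]

noncomputable def algEquivProd : Unitization S R ≃ₐ[S] S × R :=
  AlgEquiv.ofBijective ((fstHom S R).prod (lift (NonUnitalAlgHom.id S R))) <| by
    refine (Function.bijective_iff_has_inverse).2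
      ⟨fun p ↦ inl p.1 + inr (p.2 - algebraMap S R p.1 : R), fun x ↦ ?_, fun p ↦ ?_⟩
    · ext <;> simp
    · ext <;> simp [-inr_sub]

lemma isUnit_iff_isUnit_fst_and_isUnit_algebraMap_add (x : Unitization S R) :
    IsUnit x ↔ IsUnit x.fst ∧ IsUnit (algebraMap S R x.fst + x.snd) := by
  rw [← isUnit_map_iff (algEquivProd (S := S) (R := R)) x, Prod.isUnit_iff]
  rfl

lemma isQuasinilpotent_inl_iff (s : S) :
    IsQuasinilpotent (inl s : Unitization S R) ↔ ∀ x : Unitization S R, IsUnit (1 + inl s * x) := by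
  simp only [IsQuasinilpotent, ← algebraMap_eq_inl, Algebra.commutes, forall_const]

lemma isUnit_one_add_inl_mul_iff (s : S) (x : Unitization S R) :
    IsUnit (1 + inl s * x) ↔
      IsUnit (1 + s * x.fst) ∧ IsUnit (1 + algebraMap S R s * (algebraMap S R x.fst + x.snd)) := by
  rw [isUnit_iff_isUnit_fst_and_isUnit_algebraMap_add]
  simp only [fst_add, fst_one, fst_mul, fst_inl, snd_add, snd_one, snd_mul, snd_inl,
    zero_mul, mul_zero, add_zero, zero_add, map_add, map_one, map_mul, Algebra.smul_def, mul_add,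
    add_assoc]

end Unitization

theorem stmt6_general {S R : Type*} [CommRing S] [Ring R] [Algebra S R] (s : S) :
    IsQuasinilpotent (Unitization.inl s : Unitization S R) ↔
      ∀ (a : R) (b : S), ∃ (u : R) (v : S),
        (algebraMap S R s * (a + algebraMap S R b) + 1) * (u + algebraMap S R v) = 1 ∧
        (1 + s * b) * v = 1 := by
  rw [Unitization.isQuasinilpotent_inl_iff]
  constructor
  · intro H a b
    obtain ⟨hS, hR⟩ := (Unitization.isUnit_one_add_inl_mul_iff s (.inl b + .inr a)).1 (H _)
    obtain ⟨v, hv⟩ := hS.exists_right_inv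
    obtain ⟨w, hw⟩ := hR.exists_right_inv
    refine ⟨w - algebraMap S R v, v, ?_, by simpa using hv⟩
    simpa [add_comm] using hw
  · intro H x
    obtain ⟨-, v, -, hv⟩ := H 0 x.fst
    refine (Unitization.isUnit_one_add_inl_mul_iff s x).2
      ⟨IsUnit.of_mul_eq_one v hv, isUnit_one_add_mul_of_forall_exists_mul_eq_one (fun r ↦ ?_) _⟩
    obtain ⟨u, v, huv, -⟩ := H r 0
    exact ⟨u + algebraMap S R v, by simpa [add_comm] using huv⟩

theorem stmt6 {S R : Type*} [CommRing S] [Ring R] [Algebra S R] (s : S)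
    (hs : IsQuasinilpotent s) :
    IsQuasinilpotent (Unitization.inl s : Unitization S R) ↔
      ∀ (a : R) (b : S), ∃ (u : R) (v : S),
        (algebraMap S R s * (a + algebraMap S R b) + 1) * (u + algebraMap S R v) = 1 ∧
        (1 + s * b) * v = 1 :=
  stmt6_general s
end

section
/- Let (R_i)_{i ∈ I} be a family of rings indexed by a set I and let R = ∏_{i ∈ I} R_i be their direct product ring. Then R is right qnil-duo if and only if R_i is right qnil-duo for every i ∈ I. -/
/-- A ring is right qnil-duo if `R^qnil · a ⊆ a · R^qnil` for every `a`. -/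
def IsRightQnilDuo (R : Type*) [Ring R] : Prop :=
  ∀ a b : R, IsQuasinilpotent b → ∃ c : R, IsQuasinilpotent c ∧ b * a = a * c

/-! Everything is computed componentwise, and a factor `R i` is recovered inside the product
through `Pi.single i`, which preserves products and quasinilpotency. -/

theorem isQuasinilpotent_zero (R : Type*) [Ring R] : IsQuasinilpotent (0 : R) :=
  fun _ _ => by simp

section Pi

variable {I : Type*} {R : I → Type*} [∀ i, Ring (R i)]

theorem isQuasinilpotent_pi_iff {a : ∀ i, R i} :
    IsQuasinilpotent a ↔ ∀ i, IsQuasinilpotent (a i) := by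
  classical
  refine ⟨fun ha i x hx => ?_,
    fun ha x hx => Pi.isUnit_iff.2 fun i => ha i (x i) (congrFun hx i)⟩
  have hcomm : a * Pi.single i x = Pi.single i x * a := by
    ext j
    rcases eq_or_ne j i with rfl | hj <;> simp [*]
  simpa using Pi.isUnit_iff.1 (ha _ hcomm) i

theorem isQuasinilpotent_single [DecidableEq I] (i : I) {b : R i} (hb : IsQuasinilpotent b) :
    IsQuasinilpotent (Pi.single i b : ∀ j, R j) :=
  isQuasinilpotent_pi_iff.2 fun j => by
    rcases eq_or_ne j i with rfl | hj
    · simpa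
    · simpa [hj] using isQuasinilpotent_zero (R j)

theorem IsRightQnilDuo.pi (h : ∀ i, IsRightQnilDuo (R i)) : IsRightQnilDuo (∀ i, R i) := by
  intro a b hb
  choose c hc hbc using fun i => h i (a i) (b i) (isQuasinilpotent_pi_iff.1 hb i)
  exact ⟨c, isQuasinilpotent_pi_iff.2 hc, funext hbc⟩

theorem IsRightQnilDuo.of_pi (h : IsRightQnilDuo (∀ i, R i)) (i : I) : IsRightQnilDuo (R i) := by
  classical
  intro a b hb
  obtain ⟨c, hc, hbc⟩ := h (Pi.single i a) (Pi.single i b) (isQuasinilpotent_single i hb)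
  exact ⟨c i, isQuasinilpotent_pi_iff.1 hc i, by simpa using congrFun hbc i⟩

end Pi

theorem stmt9 {I : Type*} (R : I → Type*) [∀ i, Ring (R i)] :
    IsRightQnilDuo (∀ i, R i) ↔ ∀ i, IsRightQnilDuo (R i) :=
  ⟨IsRightQnilDuo.of_pi, IsRightQnilDuo.pi⟩
end

section
/- Every right qnil-duo ring is abelian; that is, if R is a right qnil-duo ring, then every idempotent e ∈ R (e² = e) is central: e·x = x·e for all x ∈ R. -/
/-!
For an idempotent `e`, the corner element `b = e x (1 - e)` squares to zero, hence is
quasinilpotent. The qnil-duo property applied to `b` and `1 - e` gives `b = b (1 - e) = (1 - e) c`,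
and multiplying by `e` on the left kills it: `b = e b = e (1 - e) c = 0`. Thus `e x = e x e`, and
the same argument for the idempotent `1 - e` gives `x e = e x e`.
-/

lemma IsNilpotent.isQuasinilpotent {R : Type*} [Ring R] {a : R} (ha : IsNilpotent a) :
    IsQuasinilpotent a :=
  fun _ hax => (Commute.isNilpotent_mul_right hax ha).isUnit_one_add

lemma IsRightQnilDuo.mul_mul_one_sub_eq_zero {R : Type*} [Ring R] (h : IsRightQnilDuo R)
    {e : R} (he : IsIdempotentElem e) (x : R) : e * x * (1 - e) = 0 := by
  have hsq : e * x * (1 - e) * (e * x * (1 - e)) = 0 := by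
    calc e * x * (1 - e) * (e * x * (1 - e)) = e * x * ((1 - e) * e) * (x * (1 - e)) := by
          noncomm_ring
      _ = 0 := by rw [he.one_sub_mul_self, mul_zero, zero_mul]
  obtain ⟨c, -, hc⟩ := h (1 - e) _ (IsNilpotent.isQuasinilpotent ⟨2, by rw [pow_two, hsq]⟩)
  rw [mul_assoc, he.one_sub.eq] at hc
  calc e * x * (1 - e) = e * (e * x * (1 - e)) := by rw [← mul_assoc, ← mul_assoc, he.eq]
    _ = 0 := by rw [hc, ← mul_assoc, he.mul_one_sub_self, zero_mul]

theorem stmt11 {R : Type*} [Ring R] (h : IsRightQnilDuo R)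
    (e : R) (he : e * e = e) (x : R) : e * x = x * e := by
  have hright : e * x * (1 - e) = 0 := h.mul_mul_one_sub_eq_zero he x
  have hleft : (1 - e) * x * e = 0 := by
    simpa using h.mul_mul_one_sub_eq_zero (IsIdempotentElem.one_sub he) x
  rw [mul_one_sub, sub_eq_zero] at hright
  rw [mul_assoc, one_sub_mul, sub_eq_zero] at hleft
  rw [hright, hleft, mul_assoc]
end

section
/- Let S be a commutative ring and R a unital S-algebra, and let Unitization S R denote the Dorroh (ideal) extension of R by S. If the ring Unitization S R is right qnil-duo, then R is right qnil-duo. -/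
/-!
The map `(s, r) ↦ s • 1 + r` retracts `Unitization S R` onto `R`, and since `R` is an ideal of
the extension, `↑b * x = ↑(b * x̄)` with `x̄` the image of `x`. So commuting with an element of `R`
can be tested in `R`; hence quasinilpotency passes from `b` to `↑b` and from `c` back to `c̄`, and
`↑b * ↑a = ↑a * c` maps to `b * a = a * c̄`.
-/

namespace Unitization

section Semiring

variable (S R : Type*) [CommSemiring S] [Semiring R] [Algebra S R]

abbrev liftId : Unitization S R →ₐ[S] R :=
  lift (NonUnitalAlgHom.id S R)

variable {S R}

@[simp]
lemma liftId_inr (r : R) : liftId S R r = r := by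
  simp

lemma inr_mul_eq_inr_mul_liftId (b : R) (x : Unitization S R) :
    (b : Unitization S R) * x = ↑(b * liftId S R x) := by
  ext <;> simp [mul_add, Algebra.smul_def, Algebra.commutes]

lemma mul_inr_eq_inr_liftId_mul (x : Unitization S R) (b : R) :
    x * (b : Unitization S R) = ↑(liftId S R x * b) := by
  ext <;> simp [add_mul, Algebra.smul_def]

end Semiring

variable {S R : Type*} [CommRing S] [Ring R] [Algebra S R]

lemma isQuasinilpotent_inr {b : R} (hb : IsQuasinilpotent b) :
    IsQuasinilpotent (b : Unitization S R) := by
  intro x hx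
  have hcomm : b * liftId S R x = liftId S R x * b := by
    simpa only [map_mul, liftId_inr] using congrArg (liftId S R) hx
  rw [inr_mul_eq_inr_mul_liftId]
  exact (isQuasiregular_iff_isUnit' S).mp (isQuasiregular_iff_isUnit.mpr (hb _ hcomm))

lemma isQuasinilpotent_liftId {c : Unitization S R} (hc : IsQuasinilpotent c) :
    IsQuasinilpotent (liftId S R c) := by
  intro x hx
  have hcomm : c * x = x * c := by
    rw [mul_inr_eq_inr_liftId_mul, inr_mul_eq_inr_mul_liftId, hx]
  simpa only [map_add, map_one, map_mul, liftId_inr] using (hc x hcomm).map (liftId S R)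

end Unitization

theorem stmt17 {S R : Type*} [CommRing S] [Ring R] [Algebra S R]
    (h : IsRightQnilDuo (Unitization S R)) : IsRightQnilDuo R := by
  intro a b hb
  obtain ⟨c, hc, hbc⟩ := h a b (Unitization.isQuasinilpotent_inr hb)
  refine ⟨Unitization.liftId S R c, Unitization.isQuasinilpotent_liftId hc, ?_⟩
  simpa only [map_mul, Unitization.liftId_inr] using congrArg (Unitization.liftId S R) hbc
end

section
/- Let R be a ring and let s, t ∈ R be central units of R. Let H_{(s,t)}(R) be the subring of the 3×3 matrix ring M₃(R) consisting of all matrices M with M₀₁ = M₀₂ = M₂₀ = M₂₁ = 0 (i.e., of the form with rows (a,0,0), (c,d,e), (0,0,f)) satisfying a − d = s·c and d − f = t·e. Then R is right qnil-duo if and only if H_{(s,t)}(R) is right qnil-duo. -/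
/-- The subring `H_{(s,t)}(R)` of `M₃(R)`: matrices with rows `(a,0,0)`, `(c,d,e)`,
`(0,0,f)` such that `a - d = s*c` and `d - f = t*e`, for central elements `s`, `t`. -/
def Hst (R : Type*) [Ring R] (s t : R)
    (hs : ∀ x : R, s * x = x * s) (ht : ∀ x : R, t * x = x * t) :
    Subring (Matrix (Fin 3) (Fin 3) R) where
  carrier := {M | M 0 1 = 0 ∧ M 0 2 = 0 ∧ M 2 0 = 0 ∧ M 2 1 = 0 ∧
    M 0 0 - M 1 1 = s * M 1 0 ∧ M 1 1 - M 2 2 = t * M 1 2}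
  zero_mem' := by simp
  one_mem' := by simp [Matrix.one_apply]
  add_mem' := by
    rintro A B ⟨hA01, hA02, hA20, hA21, hAs, hAt⟩ ⟨hB01, hB02, hB20, hB21, hBs, hBt⟩
    refine ⟨?_, ?_, ?_, ?_, ?_, ?_⟩ <;>
      simp only [Matrix.add_apply, hA01, hA02, hA20, hA21, hB01, hB02, hB20, hB21,
        add_zero, mul_add, ← hAs, ← hBs, ← hAt, ← hBt] <;> abel
  neg_mem' := by
    rintro A ⟨hA01, hA02, hA20, hA21, hAs, hAt⟩
    refine ⟨?_, ?_, ?_, ?_, ?_, ?_⟩ <;>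
      simp only [Matrix.neg_apply, hA01, hA02, hA20, hA21, neg_zero,
        mul_neg, ← hAs, ← hAt] <;> abel
  mul_mem' := by
    rintro A B ⟨hA01, hA02, hA20, hA21, hAs, hAt⟩ ⟨hB01, hB02, hB20, hB21, hBs, hBt⟩
    refine ⟨?_, ?_, ?_, ?_, ?_, ?_⟩ <;>
      simp only [Matrix.mul_apply, Fin.sum_univ_three, hA01, hA02, hA20, hA21,
        hB01, hB02, hB20, hB21, mul_zero, zero_mul, add_zero, zero_add]
    · calc A 0 0 * B 0 0 - A 1 1 * B 1 1
          = (A 0 0 - A 1 1) * B 0 0 + A 1 1 * (B 0 0 - B 1 1) := by noncomm_ring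
        _ = s * A 1 0 * B 0 0 + A 1 1 * (s * B 1 0) := by rw [hAs, hBs]
        _ = s * (A 1 0 * B 0 0) + s * (A 1 1 * B 1 0) := by
            rw [← mul_assoc (A 1 1) s, ← hs (A 1 1), mul_assoc, mul_assoc]
        _ = s * (A 1 0 * B 0 0 + A 1 1 * B 1 0) := by rw [mul_add]
    · calc A 1 1 * B 1 1 - A 2 2 * B 2 2
          = A 1 1 * (B 1 1 - B 2 2) + (A 1 1 - A 2 2) * B 2 2 := by noncomm_ring
        _ = A 1 1 * (t * B 1 2) + t * A 1 2 * B 2 2 := by rw [hAt, hBt]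
        _ = t * (A 1 1 * B 1 2) + t * (A 1 2 * B 2 2) := by
            rw [← mul_assoc (A 1 1) t, ← ht (A 1 1), mul_assoc, mul_assoc]
        _ = t * (A 1 1 * B 1 2 + A 1 2 * B 2 2) := by rw [mul_add]

/-!
Since `s` and `t` are units, a matrix of `H_{(s,t)}(R)` is determined by its diagonal
(`c = s⁻¹ (a - d)`, `e = t⁻¹ (d - f)`), and its zero pattern makes the diagonal entries multiply
independently, so `H_{(s,t)}(R) ≃+* R × R × R`. Being right qnil-duo is invariant under ring
isomorphisms, and quasinilpotence in a product is componentwise, so a product is right qnil-duo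
iff each factor is.
-/

section Quasinilpotent

variable {A B : Type*} [Ring A] [Ring B]

theorem isQuasinilpotent_zero_s19 : IsQuasinilpotent (0 : A) := fun _ _ => by simp

theorem IsQuasinilpotent.map_ringEquiv (e : A ≃+* B) {a : A} (ha : IsQuasinilpotent a) :
    IsQuasinilpotent (e a) := by
  intro x hx
  have hcomm : a * e.symm x = e.symm x * a :=
    e.injective (by simpa only [map_mul, RingEquiv.apply_symm_apply] using hx)
  simpa only [map_add, map_one, map_mul, RingEquiv.apply_symm_apply] using (ha _ hcomm).map e

theorem Prod.isQuasinilpotent_iff {p : A × B} :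
    IsQuasinilpotent p ↔ IsQuasinilpotent p.1 ∧ IsQuasinilpotent p.2 := by
  constructor
  · intro hp
    refine ⟨fun x hx => ?_, fun x hx => ?_⟩
    · simpa using (Prod.isUnit_iff.mp (hp (x, 0) (by ext <;> simp [hx]))).1
    · simpa using (Prod.isUnit_iff.mp (hp (0, x) (by ext <;> simp [hx]))).2
  · rintro ⟨h1, h2⟩ x hx
    exact Prod.isUnit_iff.mpr ⟨h1 x.1 (congrArg Prod.fst hx), h2 x.2 (congrArg Prod.snd hx)⟩

theorem IsRightQnilDuo.of_ringEquiv (e : A ≃+* B) (h : IsRightQnilDuo A) : IsRightQnilDuo B := by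
  intro a b hb
  obtain ⟨c, hc, hbc⟩ := h (e.symm a) (e.symm b) (hb.map_ringEquiv e.symm)
  refine ⟨e c, hc.map_ringEquiv e, ?_⟩
  simpa only [map_mul, RingEquiv.apply_symm_apply] using congrArg e hbc

theorem RingEquiv.isRightQnilDuo_iff (e : A ≃+* B) : IsRightQnilDuo A ↔ IsRightQnilDuo B :=
  ⟨.of_ringEquiv e, .of_ringEquiv e.symm⟩

theorem Prod.isRightQnilDuo_iff :
    IsRightQnilDuo (A × B) ↔ IsRightQnilDuo A ∧ IsRightQnilDuo B := by
  constructor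
  · intro h
    refine ⟨fun a b hb => ?_, fun a b hb => ?_⟩
    · obtain ⟨c, hc, hbc⟩ :=
        h (a, 0) (b, 0) (Prod.isQuasinilpotent_iff.mpr ⟨hb, isQuasinilpotent_zero_s19⟩)
      exact ⟨c.1, (Prod.isQuasinilpotent_iff.mp hc).1, congrArg Prod.fst hbc⟩
    · obtain ⟨c, hc, hbc⟩ :=
        h (0, a) (0, b) (Prod.isQuasinilpotent_iff.mpr ⟨isQuasinilpotent_zero_s19, hb⟩)
      exact ⟨c.2, (Prod.isQuasinilpotent_iff.mp hc).2, congrArg Prod.snd hbc⟩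
  · rintro ⟨hA, hB⟩ a b hb
    obtain ⟨hb₁, hb₂⟩ := Prod.isQuasinilpotent_iff.mp hb
    obtain ⟨c₁, hc₁, h₁⟩ := hA a.1 b.1 hb₁
    obtain ⟨c₂, hc₂, h₂⟩ := hB a.2 b.2 hb₂
    exact ⟨(c₁, c₂), Prod.isQuasinilpotent_iff.mpr ⟨hc₁, hc₂⟩, Prod.ext h₁ h₂⟩

end Quasinilpotent

namespace Hst

variable (R : Type*) [Ring R] {s t : R} (hs : ∀ x : R, s * x = x * s) (ht : ∀ x : R, t * x = x * t)

def diag : Hst R s t hs ht →+* R × R × R where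
  toFun M := (M.1 0 0, M.1 1 1, M.1 2 2)
  map_one' := rfl
  map_zero' := rfl
  map_add' _ _ := rfl
  map_mul' M N := by
    obtain ⟨hM01, hM02, hM20, hM21, -, -⟩ := M.2
    obtain ⟨hN01, hN02, hN20, hN21, -, -⟩ := N.2
    simp only [Subring.coe_mul, Matrix.mul_apply, Fin.sum_univ_three, hM01, hM02, hM20, hM21,
      hN01, hN02, hN20, hN21, mul_zero, zero_mul, add_zero, zero_add, Prod.mk_mul_mk]

variable {R hs ht}

theorem diag_injective (hsu : IsUnit s) (htu : IsUnit t) : Function.Injective (diag R hs ht) := by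
  rintro ⟨M, hM01, hM02, hM20, hM21, hMs, hMt⟩ ⟨N, hN01, hN02, hN20, hN21, hNs, hNt⟩ h
  obtain ⟨h00, h11, h22⟩ : M 0 0 = N 0 0 ∧ M 1 1 = N 1 1 ∧ M 2 2 = N 2 2 :=
    ⟨congrArg (·.1) h, congrArg (·.2.1) h, congrArg (·.2.2) h⟩
  have h10 : M 1 0 = N 1 0 := hsu.mul_left_cancel (by rw [← hMs, ← hNs, h00, h11])
  have h12 : M 1 2 = N 1 2 := htu.mul_left_cancel (by rw [← hMt, ← hNt, h11, h22])
  ext i j : 2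
  fin_cases i <;> fin_cases j <;> simp_all

theorem diag_surjective (hsu : IsUnit s) (htu : IsUnit t) : Function.Surjective (diag R hs ht) := by
  rintro ⟨a, d, f⟩
  have cancel : ∀ {u : R} (hu : IsUnit u) (x : R), x = u * (↑hu.unit⁻¹ * x) := fun hu x => by
    rw [← mul_assoc, hu.mul_val_inv, one_mul]
  exact ⟨⟨!![a, 0, 0; ↑hsu.unit⁻¹ * (a - d), d, ↑htu.unit⁻¹ * (d - f); 0, 0, f],
    rfl, rfl, rfl, rfl, cancel hsu _, cancel htu _⟩, rfl⟩

noncomputable def equivProd (hsu : IsUnit s) (htu : IsUnit t) : Hst R s t hs ht ≃+* R × R × R :=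
  RingEquiv.ofBijective (diag R hs ht) ⟨diag_injective hsu htu, diag_surjective hsu htu⟩

end Hst

theorem stmt19 {R : Type*} [Ring R] (s t : R)
    (hs : ∀ x : R, s * x = x * s) (ht : ∀ x : R, t * x = x * t)
    (hsu : IsUnit s) (htu : IsUnit t) :
    IsRightQnilDuo R ↔ IsRightQnilDuo (Hst R s t hs ht) := by
  rw [(Hst.equivProd hsu htu).isRightQnilDuo_iff, Prod.isRightQnilDuo_iff,
    Prod.isRightQnilDuo_iff, and_self, and_self]
end
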